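/- Let A be a consistent layered automaton over a finite alphabet Σ. Then an infinite word w ∈ Σ^ω is accepted by A under layered acceptance if and only if w ∈ L(⟦A⟧). Moreover, ⟦A⟧ is uniformly semantically deterministic, i.e. L(⟦A⟧,p) = L(⟦A⟧,q) for all leaf states p, q with μ̂₁(p) = μ̂₁(q). -/

import Mathlib

open scoped Classical

noncomputable section

/-! ### Infinite words and the parity condition -/

/-- The minimal value occurring infinitely often in a sequence of priorities;
for (eventually) bounded sequences this is the `liminf`. -/
def minInfOften (pi : ℕ → ℕ) : ℕ := sInf {x : ℕ | ∀ N : ℕ, ∃ n : ℕ, N ≤ n ∧ pi n = x}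

/-- The (min-)parity acceptance condition: the liminf of the priorities is even. -/
def ParityAccept (pi : ℕ → ℕ) : Prop := Even (minInfOften pi)

/-- Prepend a finite word to an infinite word. -/
def prependW {α : Type} (u : List α) (w : ℕ → α) : ℕ → α := fun i =>
  if h : i < u.length then u.get ⟨i, h⟩ else w (i - u.length)

/-- The prefix of length `n` of an infinite word, as a list. -/
def wordPrefix {α : Type} (w : ℕ → α) (n : ℕ) : List α := List.ofFn (fun i : Fin n => w i)

/-- Drop the first `n` letters of an infinite word. -/
def wordDrop {α : Type} (w : ℕ → α) (n : ℕ) : ℕ → α := fun i => w (n + i)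

/-- The periodic infinite word `v^ω` (junk if `v = []`). -/
def perWord {α : Type} [Inhabited α] (v : List α) : ℕ → α := fun i => v.getD (i % v.length) default

/-! ### Layered automata -/

/-- A layered automaton over the alphabet `α` with `d` layers.  The (disjoint) layers
are encoded by the function `layer : Q → [1,d]`; each layer is a deterministic
transition system (partial transition function `δ`, which stays inside the layer);
`μ` sends each state of layer `x+1` to its parent in layer `x` (and is the identity
on layer `1`) and is a morphism of transition systems; layer `1` is complete, carries
the initial state, and all its states are reachable from the initial state. -/
structure Layered (Q α : Type) (d : ℕ) where
  layer : Q → ℕ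
  layer_pos : ∀ q, 1 ≤ layer q
  layer_le : ∀ q, layer q ≤ d
  δ : Q → α → Option Q
  δ_layer : ∀ q a q', δ q a = some q' → layer q' = layer q
  μ : Q → Q
  μ_layer : ∀ q, 1 < layer q → layer (μ q) + 1 = layer q
  μ_id : ∀ q, layer q = 1 → μ q = q
  μ_morph : ∀ q a q', 1 < layer q → δ q a = some q' → δ (μ q) a = some (μ q')
  init : Q
  init_layer : layer init = 1
  complete1 : ∀ q a, layer q = 1 → (δ q a).isSome = true
  reach1 : ∀ q, layer q = 1 →
    Relation.ReflTransGen (fun p p' => layer p = 1 ∧ ∃ a, δ p a = some p') init q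

namespace Layered

variable {Q R α : Type} {d d' : ℕ}

/-- The run of the (deterministic) layer transition systems on a finite word. -/
def runList (A : Layered Q α d) : Q → List α → Option Q
  | q, [] => some q
  | q, a :: u =>
    match A.δ q a with
    | some q' => runList A q' u
    | none => none

/-- `μ̂_x q`: the ancestor of `q` in layer `x` (image under the composed morphisms). -/
def muHat (A : Layered Q α d) (x : ℕ) (q : Q) : Q := (A.μ)^[A.layer q - x] q

/-- A leaf state: a state that is not in the image of any of the morphisms `μ_x`. -/
def IsLeaf (A : Layered Q α d) (q : Q) : Prop := ∀ p, 1 < A.layer p → A.μ p ≠ q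

/-- `layer(q,a)`: the largest layer `x ≤ layer q` in which `δ_x (μ̂_x q) a` is defined. -/
def layerOf (A : Layered Q α d) (q : Q) (a : α) : ℕ :=
  Nat.findGreatest (fun x => (A.δ (A.muHat x q) a).isSome = true) (A.layer q)

/-- A state `p` is an ancestor of `q`. -/
def IsAncestor (A : Layered Q α d) (p q : Q) : Prop :=
  A.layer p ≤ A.layer q ∧ A.muHat (A.layer p) q = p

/-! #### Safe languages and strong acceptance -/

/-- Membership of a finite word in the `x`-safe language of `q`. -/
def SafeFin (A : Layered Q α d) (x : ℕ) (q : Q) (u : List α) : Prop :=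
  (A.runList (A.muHat x q) u).isSome = true

/-- Membership of an infinite word in the `x`-safe language of `q`. -/
def SafeInf (A : Layered Q α d) (x : ℕ) (q : Q) (w : ℕ → α) : Prop :=
  ∀ n : ℕ, A.SafeFin x q (wordPrefix w n)

/-- `w` is strongly accepted by the state `p` (which lies in the even layer `x = layer p`):
`w` is `x`-safe from `p` and no decomposition `w = u·w'` admits a state `p'` of layer `x+1`
with a `u`-run from `p` to the parent of `p'` in `T_x` such that `w'` is `(x+1)`-safe from `p'`. -/
def StronglyAcc (A : Layered Q α d) (p : Q) (w : ℕ → α) : Prop :=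
  Even (A.layer p) ∧ A.SafeInf (A.layer p) p w ∧
  ∀ (n : ℕ) (p' : Q), A.layer p' = A.layer p + 1 →
    A.runList p (wordPrefix w n) = some (A.μ p') →
    ¬ A.SafeInf (A.layer p') p' (wordDrop w n)

/-- `w` is strongly rejected by `p` (lying in an odd layer). -/
def StronglyRej (A : Layered Q α d) (p : Q) (w : ℕ → α) : Prop :=
  Odd (A.layer p) ∧ A.SafeInf (A.layer p) p w ∧
  ∀ (n : ℕ) (p' : Q), A.layer p' = A.layer p + 1 →
    A.runList p (wordPrefix w n) = some (A.μ p') →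
    ¬ A.SafeInf (A.layer p') p' (wordDrop w n)

/-- Consistency: no two states with the same layer-1 ancestor strongly accept
resp. strongly reject a common infinite word. -/
def Consistent (A : Layered Q α d) : Prop :=
  ¬ ∃ (p p' : Q) (w : ℕ → α), A.muHat 1 p = A.muHat 1 p' ∧
      A.StronglyAcc p w ∧ A.StronglyRej p' w

/-- `w` is ultimately safe in layer `x`, for the automaton started in the
layer-1 state `q0`. -/
def UltSafeFrom (A : Layered Q α d) (q0 : Q) (x : ℕ) (w : ℕ → α) : Prop :=
  ∃ (n : ℕ) (p : Q), A.layer p = x ∧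
    A.runList q0 (wordPrefix w n) = some (A.muHat 1 p) ∧
    A.SafeInf x p (wordDrop w n)

/-- Layered acceptance from `q0`: the maximal layer in which `w` is ultimately safe is even. -/
def LayeredAcceptFrom (A : Layered Q α d) (q0 : Q) (w : ℕ → α) : Prop :=
  ∃ x : ℕ, Even x ∧ A.UltSafeFrom q0 x w ∧ ∀ y : ℕ, A.UltSafeFrom q0 y w → y ≤ x

/-- Layered rejection from `q0`: the maximal layer in which `w` is ultimately safe is odd. -/
def LayeredRejectFrom (A : Layered Q α d) (q0 : Q) (w : ℕ → α) : Prop :=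
  ∃ x : ℕ, Odd x ∧ A.UltSafeFrom q0 x w ∧ ∀ y : ℕ, A.UltSafeFrom q0 y w → y ≤ x

/-! #### The semantics automaton `⟦A⟧` (a simple-by-priorities alternating parity automaton) -/

/-- The priority of the letter `a` in the state `q` of `⟦A⟧`. -/
def semPrio (A : Layered Q α d) (q : Q) (a : α) : ℕ := A.layerOf q a

/-- The transitions of `⟦A⟧` (between leaf states): `q —a→ q'` iff, for
`x = layer(q,a)`, we have `δ_x (μ̂_x q) a = μ̂_x q'`; the transition carries priority `x`. -/
def semStep (A : Layered Q α d) (q : Q) (a : α) (q' : Q) : Prop :=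
  A.IsLeaf q' ∧ A.δ (A.muHat (A.layerOf q a) q) a = some (A.muHat (A.layerOf q a) q')

/-- Runs of `⟦A⟧` over the infinite word `w`, starting in `p`. -/
def IsSemRun (A : Layered Q α d) (w : ℕ → α) (p : Q) (ρ : ℕ → Q) : Prop :=
  ρ 0 = p ∧ ∀ i : ℕ, A.semStep (ρ i) (w i) (ρ (i + 1))

/-- The sequence of priorities produced by a run of `⟦A⟧` over `w`. -/
def runPrios (A : Layered Q α d) (w : ℕ → α) (ρ : ℕ → Q) : ℕ → ℕ :=
  fun i => A.semPrio (ρ i) (w i)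

/-- A resolver for Eve in `⟦A⟧`: given the history (the finite run so far, as a list of
(state, letter) pairs), the current state and a letter of odd priority, it picks a successor. -/
def EveResolver (A : Layered Q α d) (σ : List (Q × α) → Q → α → Q) : Prop :=
  ∀ (h : List (Q × α)) (q : Q) (a : α), Odd (A.semPrio q a) → A.semStep q a (σ h q a)

/-- A resolver for Adam in `⟦A⟧` (resolving the even-priority steps). -/
def AdamResolver (A : Layered Q α d) (τ : List (Q × α) → Q → α → Q) : Prop :=
  ∀ (h : List (Q × α)) (q : Q) (a : α), Even (A.semPrio q a) → A.semStep q a (τ h q a)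

/-- A run is consistent with the Eve-resolver `σ`: every odd-priority step follows `σ`. -/
def ConsEve (A : Layered Q α d) (σ : List (Q × α) → Q → α → Q) (w : ℕ → α) (ρ : ℕ → Q) : Prop :=
  ∀ i : ℕ, Odd (A.semPrio (ρ i) (w i)) →
    ρ (i + 1) = σ (List.ofFn fun j : Fin i => (ρ (j : ℕ), w (j : ℕ))) (ρ i) (w i)

/-- A run is consistent with the Adam-resolver `τ`: every even-priority step follows `τ`. -/
def ConsAdam (A : Layered Q α d) (τ : List (Q × α) → Q → α → Q) (w : ℕ → α) (ρ : ℕ → Q) : Prop :=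
  ∀ i : ℕ, Even (A.semPrio (ρ i) (w i)) →
    ρ (i + 1) = τ (List.ofFn fun j : Fin i => (ρ (j : ℕ), w (j : ℕ))) (ρ i) (w i)

/-- Acceptance of `w` by `⟦A⟧` from the (leaf) state `p`: Eve has a winning strategy
in the game `G(⟦A⟧,w)`, i.e. a resolver all of whose consistent runs satisfy parity. -/
def SemAccept (A : Layered Q α d) (p : Q) (w : ℕ → α) : Prop :=
  ∃ σ : List (Q × α) → Q → α → Q, A.EveResolver σ ∧
    ∀ ρ : ℕ → Q, A.IsSemRun w p ρ → A.ConsEve σ w ρ → ParityAccept (A.runPrios w ρ)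

/-- Uniform semantic determinism: leaf states with the same layer-1 ancestor
recognise the same language in `⟦A⟧`. -/
def UnifSD (A : Layered Q α d) : Prop :=
  ∀ p q : Q, A.IsLeaf p → A.IsLeaf q → A.muHat 1 p = A.muHat 1 q →
    ∀ w : ℕ → α, (A.SemAccept p w ↔ A.SemAccept q w)

/-! #### Longest suffix resolvers -/

/-- `v` is a suffix-witness to `r`: the layer of `r` has a run labelled `v` ending in `r`. -/
def suffixReaches (A : Layered Q α d) (r : Q) (v : List α) : Prop :=
  ∃ p : Q, A.layer p = A.layer r ∧ A.runList p v = some r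

/-- The length of the longest suffix `v` of `u` such that the layer of `r` has a
run labelled `v` ending in `r`. -/
def longestSuffixLen (A : Layered Q α d) (u : List α) (r : Q) : ℕ :=
  Nat.findGreatest (fun k => k ≤ u.length ∧ A.suffixReaches r (u.drop (u.length - k))) u.length

/-- A longest suffix resolver for Eve, initialised to `u0`: a valid Eve-resolver that,
at a step of odd priority `x` after having read `v`, moves to an `a`-successor `q'`
maximising the length of the longest `(x+1)`-suffix of `u0·v·a` to `μ̂_{x+1} q'`. -/
def IsLongestSuffixResolverE (A : Layered Q α d) (u0 : List α)
    (σ : List (Q × α) → Q → α → Q) : Prop :=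
  A.EveResolver σ ∧
  ∀ (h : List (Q × α)) (q : Q) (a : α), Odd (A.semPrio q a) →
    ∀ q' : Q, A.semStep q a q' →
      A.longestSuffixLen (u0 ++ h.map Prod.snd ++ [a]) (A.muHat (A.semPrio q a + 1) q') ≤
      A.longestSuffixLen (u0 ++ h.map Prod.snd ++ [a]) (A.muHat (A.semPrio q a + 1) (σ h q a))

/-- A longest suffix resolver for Adam, initialised to `u0` (symmetric, for even priorities). -/
def IsLongestSuffixResolverA (A : Layered Q α d) (u0 : List α)
    (τ : List (Q × α) → Q → α → Q) : Prop :=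
  A.AdamResolver τ ∧
  ∀ (h : List (Q × α)) (q : Q) (a : α), Even (A.semPrio q a) →
    ∀ q' : Q, A.semStep q a q' →
      A.longestSuffixLen (u0 ++ h.map Prod.snd ++ [a]) (A.muHat (A.semPrio q a + 1) q') ≤
      A.longestSuffixLen (u0 ++ h.map Prod.snd ++ [a]) (A.muHat (A.semPrio q a + 1) (τ h q a))

/-! #### The random walk on `⟦A⟧` -/

/-- The uniform step probability of the random walk of `⟦A⟧`. -/
def stepProb (A : Layered Q α d) (q : Q) (a : α) (q' : Q) : ENNReal :=
  if A.semStep q a q' then ((Nat.card {p : Q // A.semStep q a p} : ENNReal))⁻¹ else 0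

/-- `m` is the Markov measure of the random walk of `⟦A⟧` over the word `w` started at `p`:
a probability measure on `ℕ → Q` whose cylinder probabilities are the products of the
uniform step probabilities. -/
def IsWalkMeasure [MeasurableSpace Q] (A : Layered Q α d) (w : ℕ → α) (p : Q)
    (m : MeasureTheory.Measure (ℕ → Q)) : Prop :=
  MeasureTheory.IsProbabilityMeasure m ∧
  ∀ (n : ℕ) (s : Fin (n + 1) → Q),
    m {ρ : ℕ → Q | ∀ i : Fin (n + 1), ρ (i : ℕ) = s i} =
      (if s 0 = p then 1 else 0) *
        ∏ i : Fin n, A.stepProb (s i.castSucc) (w (i : ℕ)) (s i.succ)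

/-! #### Normal form, centrality, safe minimality, central sequences -/

/-- Normal form: (N1) every layer `x ≥ 2` is a union of non-trivial SCCs, and
(N2) the safe language of every child is strictly smaller than that of its parent. -/
def NormalForm (A : Layered Q α d) : Prop :=
  ∀ q : Q, 2 ≤ A.layer q →
    (∀ (u : List α) (q' : Q), A.runList q u = some q' →
      ∃ v : List α, v ≠ [] ∧ A.runList q' v = some q) ∧
    (∀ p : Q, 1 < A.layer p → A.μ p = q →
      ∃ u : List α, (A.runList q u).isSome = true ∧ A.runList p u = none)

/-- Inclusion of `x`-safe languages. -/
def SafeLE (A : Layered Q α d) (x : ℕ) (p q : Q) : Prop :=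
  (∀ u : List α, A.SafeFin x p u → A.SafeFin x q u) ∧
  (∀ w : ℕ → α, A.SafeInf x p w → A.SafeInf x q w)

/-- Centralised: siblings (same parent) whose safe languages are included,
lie in the same SCC of their layer. -/
def Centralised (A : Layered Q α d) : Prop :=
  ∀ p q : Q, 2 ≤ A.layer p → A.layer q = A.layer p →
    A.muHat (A.layer p - 1) p = A.muHat (A.layer p - 1) q →
    A.SafeLE (A.layer p) p q →
    (∃ u : List α, A.runList p u = some q) ∧ (∃ v : List α, A.runList q v = some p)

/-- `L(p) = L(q)`: all leaves above (the layer-1 ancestor of) `p` and all leaves above `q`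
recognise the same language in `⟦A⟧`. -/
def LangEq1 (A : Layered Q α d) (p q : Q) : Prop :=
  ∀ l l' : Q, A.IsLeaf l → A.IsLeaf l' → A.muHat 1 l = A.muHat 1 p →
    A.muHat 1 l' = A.muHat 1 q → ∀ w : ℕ → α, (A.SemAccept l w ↔ A.SemAccept l' w)

/-- The equivalence `p ≈_x q`: language equivalence together with equality of all
`y`-safe languages for `2 ≤ y ≤ x`. -/
def ApproxEq (A : Layered Q α d) (x : ℕ) (p q : Q) : Prop :=
  A.LangEq1 p q ∧ ∀ y : ℕ, 2 ≤ y → y ≤ x →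
    ((∀ u : List α, A.SafeFin y p u ↔ A.SafeFin y q u) ∧
     (∀ w : ℕ → α, A.SafeInf y p w ↔ A.SafeInf y q w))

/-- Safe minimality: `≈_x`-equivalent states of the same layer are equal. -/
def SafeMinimal (A : Layered Q α d) : Prop :=
  ∀ p q : Q, A.layer p = A.layer q → A.ApproxEq (A.layer p) p q → p = q

/-- `z` is a central sequence for the state `p` (of layer `x = layer p`). -/
def IsCentralSeq (A : Layered Q α d) (p : Q) (z : List α) : Prop :=
  z ≠ [] ∧ A.runList p z = some p ∧
  (∀ q : Q, A.layer q = A.layer p →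
    A.muHat (A.layer p - 1) q = A.muHat (A.layer p - 1) p →
    (A.runList q z = some p ∨ A.runList q z = none)) ∧
  (∀ q' : Q, A.layer q' = A.layer p + 1 →
    A.muHat (A.layer p - 1) q' = A.muHat (A.layer p - 1) p →
    A.runList q' z = none)

end Layered

/-! ### Morphisms of layered automata -/

/-- A morphism of layered automata. -/
structure IsLayMorphism {Q R α : Type} {d d' : ℕ} (A : Layered Q α d) (B : Layered R α d')
    (φ : Q → R) : Prop where
  map_init : φ A.init = B.init
  map_step : ∀ q a q', A.δ q a = some q' → B.δ (φ q) a = some (φ q')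
  map_anc : ∀ p q, A.IsAncestor p q → B.IsAncestor (φ p) (φ q)

/-- A strong morphism of layered automata additionally preserves non-transitions. -/
def IsStrongLayMorphism {Q R α : Type} {d d' : ℕ} (A : Layered Q α d) (B : Layered R α d')
    (φ : Q → R) : Prop :=
  IsLayMorphism A B φ ∧ ∀ q a, A.δ q a = none → B.δ (φ q) a = none

/-- An isomorphism of layered automata: a bijection on states that restricts to
isomorphisms of the layer transition systems, preserves the initial state, and
commutes with the morphisms `μ`. -/
structure IsLayIso {Q R α : Type} {d d' : ℕ} (A : Layered Q α d) (B : Layered R α d')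
    (φ : Q ≃ R) : Prop where
  map_layer : ∀ q, B.layer (φ q) = A.layer q
  map_init : φ A.init = B.init
  map_mu : ∀ q, φ (A.μ q) = B.μ (φ q)
  map_step : ∀ q a, (A.δ q a).map φ = B.δ (φ q) a

/-- `L(⟦A⟧) = L(⟦B⟧)`: the semantics automata (with any choice of initial leaf states
above the respective initial states) accept the same infinite words. -/
def SemLangEq {Q R α : Type} {d d' : ℕ} (A : Layered Q α d) (B : Layered R α d') : Prop :=
  ∀ (p : Q) (q : R), A.IsLeaf p → A.muHat 1 p = A.init → B.IsLeaf q → B.muHat 1 q = B.init →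
    ∀ w : ℕ → α, (A.SemAccept p w ↔ B.SemAccept q w)

/-! ### Deterministic parity automata -/

/-- A deterministic parity automaton over `α` with priorities in `[1,d]`. -/
structure DPA (Q α : Type) (d : ℕ) where
  init : Q
  next : Q → α → Q
  prio : Q → α → ℕ
  prio_pos : ∀ q a, 1 ≤ prio q a
  prio_le : ∀ q a, prio q a ≤ d

namespace DPA

variable {Q α : Type} {d : ℕ}

/-- The unique run of a DPA on an infinite word. -/
def run (B : DPA Q α d) (w : ℕ → α) : ℕ → Q
  | 0 => B.init
  | n + 1 => B.next (run B w n) (w n)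

/-- Acceptance by a DPA: the priorities along the unique run satisfy parity. -/
def Accepts (B : DPA Q α d) (w : ℕ → α) : Prop :=
  ParityAccept (fun i => B.prio (B.run w i) (w i))

end DPA

/-- `L` is ω-regular: recognised by some deterministic parity automaton. -/
def IsOmegaRegular {α : Type} (L : Set (ℕ → α)) : Prop :=
  ∃ (n d : ℕ) (B : DPA (Fin n) α d), ∀ w : ℕ → α, w ∈ L ↔ B.Accepts w

/-! ### Nondeterministic coBüchi automata -/

/-- A (complete) nondeterministic coBüchi automaton: transitions carry priorities in `{1,2}`. -/
structure NCA (Q α : Type) where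
  init : Q
  trans : Q → α → ℕ → Q → Prop
  prio_mem : ∀ q a x q', trans q a x q' → x = 1 ∨ x = 2
  complete : ∀ q a, ∃ x q', trans q a x q'

namespace NCA

variable {Q α : Type}

/-- Nondeterministic acceptance from the state `q`. -/
def AcceptFrom (B : NCA Q α) (q : Q) (w : ℕ → α) : Prop :=
  ∃ (ρ : ℕ → Q) (pri : ℕ → ℕ), ρ 0 = q ∧
    (∀ i : ℕ, B.trans (ρ i) (w i) (pri i) (ρ (i + 1))) ∧ ParityAccept pri

/-- Semantic determinism: every `a`-successor of `p` recognises `a⁻¹ L(p)`. -/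
def SemDet (B : NCA Q α) : Prop :=
  ∀ p a x q, B.trans p a x q →
    ∀ w : ℕ → α, (B.AcceptFrom q w ↔ B.AcceptFrom p (prependW [a] w))

/-- Safe determinism: all `a`-transitions from a state carry the same priority, and
there is at most one `a`-transition of priority `2` from each state. -/
def SafeDet (B : NCA Q α) : Prop :=
  (∀ q a x q' x' q'', B.trans q a x q' → B.trans q a x' q'' → x = x') ∧
  (∀ q a q' q'', B.trans q a 2 q' → B.trans q a 2 q'' → q' = q'')

/-- 1-saturation: priority-1 transitions go to all language-equivalent states. -/
def OneSaturated (B : NCA Q α) : Prop :=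
  ∀ q a p p', B.trans q a 1 p →
    (∀ w : ℕ → α, (B.AcceptFrom p' w ↔ B.AcceptFrom p w)) → B.trans q a 1 p'

end NCA

/-! ### Simple-by-priorities alternating parity automata (abstract) -/

/-- A simple-by-priorities alternating parity automaton: a complete transition system
over `α × [1,d]` in which all `a`-transitions from a state carry the same priority. -/
structure SPA (Q α : Type) (d : ℕ) where
  init : Q
  step : Q → α → Q → Prop
  prio : Q → α → ℕ
  prio_pos : ∀ q a, 1 ≤ prio q a
  prio_le : ∀ q a, prio q a ≤ d
  complete : ∀ q a, ∃ q', step q a q'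

/-! ### The congruence on tuples of finite words -/

/-- The data of the congruence at one level (tuples of a fixed length,
represented as reversed lists of components: the head is the last component). -/
structure CongrLevel (α : Type) where
  bot : List (List α) → Prop
  eq : List (List α) → List (List α) → Prop
  ptd : List (List α) → Prop

/-- Concatenate a finite word to the last component of a tuple
(tuples are represented as reversed lists: the head is the last component). -/
def tcat {α : Type} (t : List (List α)) (v : List α) : List (List α) :=
  match t with
  | h :: rest => (h ++ v) :: rest
  | [] => []

/-- Merge the last two components of a tuple. -/
def tmerge {α : Type} (t : List (List α)) : List (List α) :=
  match t with
  | u' :: h :: rest => (h ++ u') :: rest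
  | t' => t'

/-- The congruence data at level `n` (handling tuples of length `n+1`), defined by
recursion on the level, following the inductive definition of `≈ ⊥`, `≈` and `pointed`. -/
def congrData {α : Type} [Inhabited α] (L : Set (ℕ → α)) : ℕ → CongrLevel α
  | 0 =>
    { bot := fun _ => False
      eq := fun t s =>
        match t, s with
        | [u], [v] => ∀ w : ℕ → α, (prependW u w ∈ L ↔ prependW v w ∈ L)
        | _, _ => False
      ptd := fun _ => True }
  | n + 1 =>
    let C := congrData L n
    let bot : List (List α) → Prop := fun t =>
      match t with
      | u' :: ubar =>
        C.bot (tmerge (u' :: ubar)) ∨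
        ∀ w : List α, w ≠ [] → C.eq (tcat (tmerge (u' :: ubar)) w) ubar →
          ((prependW ubar.reverse.flatten (perWord (u' ++ w)) ∈ L) ↔ Even (n + 1))
      | [] => True
    let eq : List (List α) → List (List α) → Prop := fun t s =>
      C.eq (tmerge t) (tmerge s) ∧ ∀ v : List α, (bot (tcat t v) ↔ bot (tcat s v))
    let ptd : List (List α) → Prop := fun t =>
      match t with
      | u' :: ubar =>
        ¬ bot (u' :: ubar) ∧ C.ptd ubar ∧
        ∀ (vbar : List (List α)) (v' : List α), vbar.length = n + 1 → C.ptd vbar →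
          C.eq (tcat vbar v') ubar → ¬ bot ((v' ++ u') :: vbar) →
          eq ((v' ++ u') :: vbar) (u' :: ubar)
      | [] => False
    { bot := bot, eq := eq, ptd := ptd }

/-- `t ≈ ⊥` (for a nonempty tuple `t`, in reversed representation). -/
def TupBot {α : Type} [Inhabited α] (L : Set (ℕ → α)) (t : List (List α)) : Prop :=
  (congrData L (t.length - 1)).bot t

/-- `t ≈ s` (for nonempty tuples of the same length, in reversed representation). -/
def TupEq {α : Type} [Inhabited α] (L : Set (ℕ → α)) (t s : List (List α)) : Prop :=
  t.length = s.length ∧ (congrData L (t.length - 1)).eq t s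

/-- `t` is pointed. -/
def TupPointed {α : Type} [Inhabited α] (L : Set (ℕ → α)) (t : List (List α)) : Prop :=
  (congrData L (t.length - 1)).ptd t

/-- `cls` exhibits `A` as (a copy of) the congruence automaton `A_≈` of `L`: its states
are the `≈`-classes of pointed tuples (the layer being the tuple length), transitions
are given by concatenation in the last component, the initial state is the class of
`(ε)`, and the morphisms are given by merging the last two components. -/
structure IsCongrAut {α : Type} [Inhabited α] (L : Set (ℕ → α)) {Q : Type} {d : ℕ}
    (A : Layered Q α d) (cls : (t : List (List α)) → TupPointed L t → Q) : Prop where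
  surj : ∀ q : Q, ∃ (t : List (List α)) (ht : TupPointed L t), cls t ht = q
  cls_eq : ∀ t ht s hs, cls t ht = cls s hs ↔ TupEq L t s
  layer_eq : ∀ t ht, A.layer (cls t ht) = t.length
  init_eq : ∀ h : TupPointed L [([] : List α)], cls [([] : List α)] h = A.init
  step_some : ∀ t ht (a : α) (h' : TupPointed L (tcat t [a])),
    A.δ (cls t ht) a = some (cls (tcat t [a]) h')
  step_none : ∀ t ht (a : α), TupBot L (tcat t [a]) → A.δ (cls t ht) a = none
  mu_eq : ∀ (u' : List α) (ubar : List (List α)) (h : TupPointed L (u' :: ubar))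
    (h' : TupPointed L (tmerge (u' :: ubar))), ubar ≠ [] →
    A.μ (cls (u' :: ubar) h) = cls (tmerge (u' :: ubar)) h'

end

/-!
Fix a run `ρ` of `⟦A⟧` on `w` and let `c` be its liminf priority. From some point on, the
`c`-ancestors of the states of `ρ` form a `c`-safe run of `T_c`. If at every step of priority `c`
the player choosing the successor prefers one whose `(c+1)`-ancestor is safe for the rest of the
word, then no child in layer `c+1` can be safe from that run: otherwise such a successor would be
picked at the next step of priority `c`, and all later priorities would exceed `c`. So the
`c`-ancestor strongly accepts or rejects the suffix of `w`, according to the parity of `c`.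
The same holds for the state reached in the maximal layer `x` in which `w` is ultimately safe.
Both states lie over the same state of `T₁`, so by consistency `c` and `x` have the same parity.
The player who wins according to the parity of `x` plays this greedy strategy, and so the
parity of `x` decides `G(⟦A⟧,w)`; since it depends only on the state of `T₁`, `⟦A⟧` is
uniformly semantically deterministic.
-/

open Filter

theorem wordPrefix_succ {α : Type} (w : ℕ → α) (n : ℕ) :
    wordPrefix w (n + 1) = wordPrefix w n ++ [w n] := by
  rw [wordPrefix, List.ofFn_succ', List.concat_eq_append]
  rfl

theorem wordDrop_wordDrop {α : Type} (w : ℕ → α) (m n : ℕ) :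
    wordDrop (wordDrop w m) n = wordDrop w (m + n) := by
  funext i; simp [wordDrop, Nat.add_assoc]

theorem wordDrop_zero {α : Type} (w : ℕ → α) : wordDrop w 0 = w := by
  funext i; simp [wordDrop]

theorem wordPrefix_add {α : Type} (w : ℕ → α) (m n : ℕ) :
    wordPrefix w (m + n) = wordPrefix w m ++ wordPrefix (wordDrop w m) n := by
  induction n with
  | zero => simp [wordPrefix]
  | succ n ih =>
    rw [← Nat.add_assoc, wordPrefix_succ, ih, wordPrefix_succ, List.append_assoc]
    rfl

theorem exists_frequently_eq_of_frequently_lt {f : ℕ → ℕ} {B : ℕ}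
    (h : ∃ᶠ n in atTop, f n < B) : ∃ v < B, ∃ᶠ n in atTop, f n = v := by
  have : ∃ᶠ n in atTop, ∃ v ∈ Finset.range B, f n = v :=
    h.mono fun n hn => ⟨f n, Finset.mem_range.2 hn, rfl⟩
  simpa using (Finset.frequently_exists _).1 this

theorem frequently_eq_minInfOften {f : ℕ → ℕ} {B : ℕ} (hbd : ∀ n, f n ≤ B) :
    ∃ᶠ n in atTop, f n = minInfOften f := by
  obtain ⟨v, -, hv⟩ := exists_frequently_eq_of_frequently_lt (B := B + 1)
    (Frequently.of_forall fun n => Nat.lt_succ_of_le (hbd n))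
  have hne : {x : ℕ | ∀ N : ℕ, ∃ n : ℕ, N ≤ n ∧ f n = x}.Nonempty :=
    ⟨v, frequently_atTop.1 hv⟩
  exact frequently_atTop.2 (Nat.sInf_mem hne)

theorem eventually_minInfOften_le (f : ℕ → ℕ) : ∀ᶠ n in atTop, minInfOften f ≤ f n := by
  by_contra h
  simp only [not_eventually, not_le] at h
  obtain ⟨v, hv, hfreq⟩ := exists_frequently_eq_of_frequently_lt h
  have hv' : v ∈ {x : ℕ | ∀ N : ℕ, ∃ n : ℕ, N ≤ n ∧ f n = x} :=
    frequently_atTop.1 hfreq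
  exact absurd (Nat.sInf_le hv') (not_le.2 hv)

namespace Layered

variable {Q α : Type} {d : ℕ} (A : Layered Q α d)

theorem runList_cons (q : Q) (a : α) (u : List α) :
    A.runList q (a :: u) = (A.δ q a).bind (fun p => A.runList p u) := by
  cases h : A.δ q a <;> simp [runList, h]

theorem runList_singleton (q : Q) (a : α) : A.runList q [a] = A.δ q a := by
  cases h : A.δ q a <;> simp [h, runList]

theorem runList_append (q : Q) (u v : List α) :
    A.runList q (u ++ v) = (A.runList q u).bind (fun p => A.runList p v) := by
  induction u generalizing q with
  | nil => rfl
  | cons a u ih => cases h : A.δ q a <;> simp [runList_cons, h, ih]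

theorem layer_runList {q q' : Q} {u : List α} (h : A.runList q u = some q') :
    A.layer q' = A.layer q := by
  induction u generalizing q with
  | nil => cases h; rfl
  | cons a u ih =>
    cases hd : A.δ q a with
    | none => simp [runList_cons, hd] at h
    | some p =>
      simp only [runList_cons, hd, Option.bind_some] at h
      rw [ih h, A.δ_layer q a p hd]

theorem complete1_runList {q : Q} (h : A.layer q = 1) (u : List α) :
    (A.runList q u).isSome = true := by
  induction u generalizing q with
  | nil => rfl
  | cons a u ih =>
    obtain ⟨p, hp⟩ := Option.isSome_iff_exists.1 (A.complete1 q a h)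
    simpa [runList_cons, hp] using ih (by rw [A.δ_layer q a p hp, h])

theorem δ_iterate_μ {q q' : Q} {a : α} (h : A.δ q a = some q') (k : ℕ) :
    A.δ ((A.μ)^[k] q) a = some ((A.μ)^[k] q') := by
  induction k with
  | zero => exact h
  | succ k ih =>
    rw [Function.iterate_succ_apply', Function.iterate_succ_apply']
    by_cases h1 : 1 < A.layer ((A.μ)^[k] q)
    · exact A.μ_morph _ a _ h1 ih
    · have hl1 : A.layer ((A.μ)^[k] q) = 1 := by have := A.layer_pos ((A.μ)^[k] q); omega
      have hl2 : A.layer ((A.μ)^[k] q') = 1 := by rw [A.δ_layer _ a _ ih, hl1]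
      rwa [A.μ_id _ hl1, A.μ_id _ hl2]

theorem runList_iterate_μ {q q' : Q} {u : List α} (h : A.runList q u = some q') (k : ℕ) :
    A.runList ((A.μ)^[k] q) u = some ((A.μ)^[k] q') := by
  induction u generalizing q with
  | nil => cases h; rfl
  | cons a u ih =>
    cases hd : A.δ q a with
    | none => simp [runList_cons, hd] at h
    | some p =>
      simp only [runList_cons, hd, Option.bind_some] at h
      simpa [runList_cons, A.δ_iterate_μ hd k] using ih h

theorem layer_iterate_μ {q : Q} {k : ℕ} (h : k < A.layer q) :
    A.layer ((A.μ)^[k] q) = A.layer q - k := by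
  induction k with
  | zero => rfl
  | succ k ih =>
    rw [Function.iterate_succ_apply']
    have := A.μ_layer ((A.μ)^[k] q) (by rw [ih (by omega)]; omega)
    rw [ih (by omega)] at this
    omega

theorem muHat_of_le {q : Q} {x : ℕ} (h : A.layer q ≤ x) : A.muHat x q = q := by
  rw [muHat, Nat.sub_eq_zero_of_le h]; rfl

theorem layer_muHat {q : Q} {x : ℕ} (h1 : 1 ≤ x) (h2 : x ≤ A.layer q) :
    A.layer (A.muHat x q) = x := by
  rcases h2.eq_or_lt with h | h
  · rw [A.muHat_of_le h.ge, h]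
  · rw [muHat, A.layer_iterate_μ (by omega)]; omega

theorem le_layer_of_layer_muHat {q : Q} {x : ℕ} (h : A.layer (A.muHat x q) = x) :
    x ≤ A.layer q := by
  by_contra hc
  rw [A.muHat_of_le (by omega)] at h
  omega

theorem muHat_muHat {q : Q} {x y : ℕ} (hx : 1 ≤ x) (hxy : x ≤ y) :
    A.muHat x (A.muHat y q) = A.muHat x q := by
  by_cases hy : A.layer q ≤ y
  · rw [A.muHat_of_le hy]
  · rw [muHat, A.layer_muHat (by omega) (by omega), muHat, muHat, ← Function.iterate_add_apply]
    congr 1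
    omega

theorem muHat_μ {p : Q} {x : ℕ} (h1 : 1 < A.layer p) (hx : x < A.layer p) :
    A.muHat x (A.μ p) = A.muHat x p := by
  have := A.μ_layer p h1
  rw [muHat, muHat, show A.layer p - x = (A.layer (A.μ p) - x) + 1 by omega,
    Function.iterate_succ_apply]

theorem δ_muHat {q q' : Q} {a : α} (h : A.δ q a = some q') (x : ℕ) :
    A.δ (A.muHat x q) a = some (A.muHat x q') := by
  rw [muHat, muHat, A.δ_layer q a q' h]
  exact A.δ_iterate_μ h _

theorem runList_muHat {q q' : Q} {u : List α} (h : A.runList q u = some q') (x : ℕ) :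
    A.runList (A.muHat x q) u = some (A.muHat x q') := by
  rw [muHat, muHat, A.layer_runList h]
  exact A.runList_iterate_μ h _

theorem exists_leaf_above (r : Q) : ∃ l, A.IsLeaf l ∧ A.muHat (A.layer r) l = r := by
  induction hk : d - A.layer r using Nat.strong_induction_on generalizing r with
  | _ k ih =>
    by_cases hleaf : A.IsLeaf r
    · exact ⟨r, hleaf, A.muHat_of_le le_rfl⟩
    obtain ⟨p, hp1, rfl⟩ : ∃ p, 1 < A.layer p ∧ A.μ p = r := by simpa [IsLeaf] using hleaf
    have hlp := A.μ_layer p hp1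
    obtain ⟨l, hl, hml⟩ := ih _ (by have := A.layer_le p; omega) p rfl
    refine ⟨l, hl, ?_⟩
    rw [← A.muHat_muHat (A.layer_pos _) (by omega : A.layer (A.μ p) ≤ A.layer p), hml,
      ← A.muHat_μ hp1 (by omega), A.muHat_of_le le_rfl]

theorem safeFin_iff {x : ℕ} {p : Q} (hp : A.layer p = x) (u : List α) :
    A.SafeFin x p u ↔ (A.runList p u).isSome = true := by
  rw [SafeFin, A.muHat_of_le hp.le]

theorem safeInf_shift {x n : ℕ} {p p' : Q} {w : ℕ → α} (hp : A.layer p = x)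
    (hsafe : A.SafeInf x p w) (hrun : A.runList p (wordPrefix w n) = some p') :
    A.layer p' = x ∧ A.SafeInf x p' (wordDrop w n) := by
  have hp' : A.layer p' = x := by rw [A.layer_runList hrun, hp]
  refine ⟨hp', fun m => (A.safeFin_iff hp' _).2 ?_⟩
  simpa [wordPrefix_add, runList_append, hrun] using (A.safeFin_iff hp _).1 (hsafe (n + m))

theorem exists_step_of_safeInf {x : ℕ} {p : Q} {w : ℕ → α} (hp : A.layer p = x)
    (hsafe : A.SafeInf x p w) :
    ∃ p', A.δ p (w 0) = some p' ∧ A.layer p' = x ∧ A.SafeInf x p' (wordDrop w 1) := by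
  obtain ⟨p', hp'⟩ := Option.isSome_iff_exists.1 ((A.safeFin_iff hp _).1 (hsafe 1))
  have hrun : A.δ p (w 0) = some p' := by simpa [wordPrefix, runList_singleton] using hp'
  exact ⟨p', hrun, A.safeInf_shift hp hsafe hp'⟩

theorem one_le_semPrio (q : Q) (a : α) : 1 ≤ A.semPrio q a :=
  Nat.le_findGreatest (A.layer_pos q)
    (A.complete1 _ a (A.layer_muHat le_rfl (A.layer_pos q)))

theorem semPrio_le_layer (q : Q) (a : α) : A.semPrio q a ≤ A.layer q :=
  Nat.findGreatest_le _

theorem semPrio_le_d (q : Q) (a : α) : A.semPrio q a ≤ d :=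
  (A.semPrio_le_layer q a).trans (A.layer_le q)

theorem le_semPrio_of_isSome {q : Q} {a : α} {x : ℕ} (hx : x ≤ A.layer q)
    (h : (A.δ (A.muHat x q) a).isSome = true) : x ≤ A.semPrio q a :=
  Nat.le_findGreatest hx h

theorem semStep_total (q : Q) (a : α) : ∃ q', A.semStep q a q' := by
  obtain ⟨t, ht⟩ := Option.isSome_iff_exists.1 <| Nat.findGreatest_of_ne_zero
    (P := fun x => (A.δ (A.muHat x q) a).isSome = true) rfl
    (Nat.one_le_iff_ne_zero.1 (A.one_le_semPrio q a))
  have hlt : A.layer t = A.layerOf q a := by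
    rw [A.δ_layer _ a _ ht]
    exact A.layer_muHat (A.one_le_semPrio q a) (A.semPrio_le_layer q a)
  obtain ⟨l, hl, hml⟩ := A.exists_leaf_above t
  exact ⟨l, hl, by rw [← hlt, hml, hlt]; exact ht⟩

theorem semStep_muHat {q q' : Q} {a : α} (h : A.semStep q a q') {x : ℕ}
    (hx1 : 1 ≤ x) (hx : x ≤ A.semPrio q a) :
    A.δ (A.muHat x q) a = some (A.muHat x q') := by
  have hx' : x ≤ A.layerOf q a := hx
  simpa only [A.muHat_muHat hx1 hx'] using A.δ_muHat h.2 x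

theorem runList_muHat_of_le_semPrio {w : ℕ → α} {ρ : ℕ → Q}
    (hρ : ∀ i, A.semStep (ρ i) (w i) (ρ (i + 1))) {x N : ℕ} (hx1 : 1 ≤ x)
    (hge : ∀ i, N ≤ i → x ≤ A.semPrio (ρ i) (w i)) (n : ℕ) :
    A.runList (A.muHat x (ρ N)) (wordPrefix (wordDrop w N) n) = some (A.muHat x (ρ (N + n))) := by
  induction n with
  | zero => rfl
  | succ n ih =>
    rw [wordPrefix_succ, runList_append, ih, Option.bind_some, runList_singleton]
    exact A.semStep_muHat (hρ (N + n)) hx1 (hge (N + n) (by omega))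

theorem le_semPrio_of_safeInf {w : ℕ → α} {ρ : ℕ → Q}
    (hρ : ∀ i, A.semStep (ρ i) (w i) (ρ (i + 1))) {M x : ℕ} (hx : 1 ≤ x)
    (hlay : x ≤ A.layer (ρ M)) (hsafe : A.SafeInf x (A.muHat x (ρ M)) (wordDrop w M)) :
    ∀ i, M ≤ i → x ≤ A.semPrio (ρ i) (w i) := by
  have hlayM := A.layer_muHat hx hlay
  have hprio : ∀ n, A.runList (A.muHat x (ρ M)) (wordPrefix (wordDrop w M) n) =
      some (A.muHat x (ρ (M + n))) → x ≤ A.semPrio (ρ (M + n)) (w (M + n)) := by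
    intro n hrun
    have hsome := (A.safeFin_iff hlayM _).1 (hsafe (n + 1))
    rw [wordPrefix_succ, runList_append, hrun, Option.bind_some, runList_singleton] at hsome
    exact A.le_semPrio_of_isSome
      (A.le_layer_of_layer_muHat (by rw [A.layer_runList hrun, hlayM])) hsome
  have hrun : ∀ n, A.runList (A.muHat x (ρ M)) (wordPrefix (wordDrop w M) n) =
      some (A.muHat x (ρ (M + n))) := by
    intro n
    induction n with
    | zero => rfl
    | succ n ih =>
      rw [wordPrefix_succ, runList_append, ih, Option.bind_some, runList_singleton]
      exact A.semStep_muHat (hρ (M + n)) hx (hprio n ih)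
  intro i hi
  obtain ⟨n, rfl⟩ := Nat.exists_eq_add_of_le hi
  exact hprio n (hrun n)

/-- The common core of strong acceptance and strong rejection, which add the parity of the layer
of `p`. -/
def StronglySafe (p : Q) (w : ℕ → α) : Prop :=
  A.SafeInf (A.layer p) p w ∧
  ∀ (n : ℕ) (p' : Q), A.layer p' = A.layer p + 1 →
    A.runList p (wordPrefix w n) = some (A.μ p') → ¬ A.SafeInf (A.layer p') p' (wordDrop w n)

theorem Consistent.even_layer_iff {A : Layered Q α d} (hcons : A.Consistent) {p p' : Q}
    {w : ℕ → α} (h1 : A.muHat 1 p = A.muHat 1 p') (hp : A.StronglySafe p w)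
    (hp' : A.StronglySafe p' w) : Even (A.layer p) ↔ Even (A.layer p') := by
  rcases Nat.even_or_odd (A.layer p) with he | ho <;>
    rcases Nat.even_or_odd (A.layer p') with he' | ho'
  · exact iff_of_true he he'
  · exact absurd ⟨p, p', w, h1, ⟨he, hp⟩, ⟨ho', hp'⟩⟩ hcons
  · exact absurd ⟨p', p, w, h1.symm, ⟨he', hp'⟩, ⟨ho, hp⟩⟩ hcons
  · exact iff_of_false (Nat.not_even_iff_odd.2 ho) (Nat.not_even_iff_odd.2 ho')

def IsSafeSucc (w : ℕ → α) (i : ℕ) (q : Q) (a : α) (q' : Q) : Prop :=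
  A.semStep q a q' ∧ A.semPrio q a + 1 ≤ A.layer q' ∧
    A.SafeInf (A.semPrio q a + 1) (A.muHat (A.semPrio q a + 1) q') (wordDrop w (i + 1))

noncomputable def greedySucc (w : ℕ → α) (i : ℕ) (q : Q) (a : α) : Q :=
  if h : ∃ q', A.IsSafeSucc w i q a q' then h.choose else (A.semStep_total q a).choose

theorem semStep_greedySucc (w : ℕ → α) (i : ℕ) (q : Q) (a : α) :
    A.semStep q a (A.greedySucc w i q a) := by
  unfold greedySucc
  split_ifs with h
  exacts [h.choose_spec.1, (A.semStep_total q a).choose_spec]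

theorem isSafeSucc_greedySucc {w : ℕ → α} {i : ℕ} {q : Q} {a : α}
    (h : ∃ q', A.IsSafeSucc w i q a q') : A.IsSafeSucc w i q a (A.greedySucc w i q a) := by
  rw [greedySucc, dif_pos h]
  exact h.choose_spec

theorem exists_isSafeSucc_of_child {w : ℕ → α} {i : ℕ} {q : Q} {a : α} {p' : Q}
    (hp' : A.layer p' = A.semPrio q a + 1)
    (hδ : A.δ (A.muHat (A.semPrio q a) q) a = some (A.μ p'))
    (hsafe : A.SafeInf (A.semPrio q a + 1) p' (wordDrop w (i + 1))) :
    ∃ q', A.IsSafeSucc w i q a q' := by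
  obtain ⟨l, hl, hml⟩ := A.exists_leaf_above p'
  rw [hp'] at hml
  have hy1 := A.one_le_semPrio q a
  have hμ : A.muHat (A.semPrio q a) l = A.μ p' := by
    rw [← A.muHat_muHat hy1 (Nat.le_succ _), hml, ← A.muHat_μ (by omega) (by omega),
      A.muHat_of_le (by have := A.μ_layer p' (by omega); omega)]
  refine ⟨l, ⟨hl, ?_⟩, A.le_layer_of_layer_muHat (by rw [hml, hp']), ?_⟩
  · show A.δ (A.muHat (A.semPrio q a) q) a = some (A.muHat (A.semPrio q a) l)
    rw [hμ, hδ]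
  · rwa [hml]

theorem exists_safe_child_of_le_semPrio {w : ℕ → α} {ρ : ℕ → Q}
    (hρ : ∀ i, A.semStep (ρ i) (w i) (ρ (i + 1))) {c m : ℕ} (hc1 : 1 ≤ c)
    (hge : ∀ i, m ≤ i → c ≤ A.semPrio (ρ i) (w i)) {p : Q} (hp : A.layer p = c + 1)
    (hμ : A.μ p = A.muHat c (ρ m)) (hsafe : A.SafeInf (c + 1) p (wordDrop w m))
    {j : ℕ} (hj : m ≤ j) :
    ∃ P, A.layer P = c + 1 ∧ A.μ P = A.muHat c (ρ j) ∧
      A.SafeInf (c + 1) P (wordDrop w j) := by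
  induction j, hj using Nat.le_induction with
  | base => exact ⟨p, hp, hμ, hsafe⟩
  | succ j hj ih =>
    obtain ⟨P, hP, hPμ, hPsafe⟩ := ih
    obtain ⟨P', hδ, hP', hP'safe⟩ := A.exists_step_of_safeInf hP hPsafe
    refine ⟨P', hP', ?_, by rwa [wordDrop_wordDrop] at hP'safe⟩
    have hstep := A.μ_morph P (w j) P' (by omega) hδ
    rw [hPμ, A.semStep_muHat (hρ j) hc1 (hge j hj)] at hstep
    exact (Option.some.inj hstep).symm

theorem stronglySafe_of_greedy {w : ℕ → α} {ρ : ℕ → Q}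
    (hρ : ∀ i, A.semStep (ρ i) (w i) (ρ (i + 1))) {c N : ℕ} (hc1 : 1 ≤ c)
    (hinf : ∃ᶠ j in atTop, A.semPrio (ρ j) (w j) = c)
    (hge : ∀ i, N ≤ i → c ≤ A.semPrio (ρ i) (w i))
    (hgreedy : ∀ j, A.semPrio (ρ j) (w j) = c → ρ (j + 1) = A.greedySucc w j (ρ j) (w j)) :
    A.StronglySafe (A.muHat c (ρ N)) (wordDrop w N) := by
  have hlay : A.layer (A.muHat c (ρ N)) = c :=
    A.layer_muHat hc1 ((hge N le_rfl).trans (A.semPrio_le_layer _ _))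
  have hrun := A.runList_muHat_of_le_semPrio hρ hc1 hge
  refine ⟨by rw [hlay]; exact fun n => (A.safeFin_iff hlay _).2 (by rw [hrun n]; rfl), ?_⟩
  intro n p hp hrunp hsafe
  rw [hlay] at hp
  have hμ : A.μ p = A.muHat c (ρ (N + n)) := Option.some.inj (hrunp.symm.trans (hrun n))
  obtain ⟨j, hj, hjc⟩ := frequently_atTop.1 hinf (N + n)
  obtain ⟨P, hP, hPμ, hPsafe⟩ := A.exists_safe_child_of_le_semPrio hρ hc1
    (fun i hi => hge i (by omega)) hp hμ (by rwa [hp, wordDrop_wordDrop] at hsafe) hj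
  obtain ⟨P', hδ, hP', hP'safe⟩ := A.exists_step_of_safeInf hP hPsafe
  have hsucc : ∃ q', A.IsSafeSucc w j (ρ j) (w j) q' := by
    refine A.exists_isSafeSucc_of_child (p' := P') (by rw [hjc, hP']) ?_ ?_
    · rw [hjc, ← hPμ]
      exact A.μ_morph P _ P' (by omega) hδ
    · rw [hjc]
      rwa [wordDrop_wordDrop] at hP'safe
  obtain ⟨-, hlay', hsafe'⟩ := A.isSafeSucc_greedySucc hsucc
  rw [← hgreedy j hjc, hjc] at hlay' hsafe'
  have hlock := A.le_semPrio_of_safeInf hρ (by omega) hlay' hsafe'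
  obtain ⟨j', hj', hj'c⟩ := frequently_atTop.1 hinf (j + 1)
  have := hlock j' hj'
  omega

theorem ultSafeFrom_one {s : Q} (hs : A.layer s = 1) (w : ℕ → α) : A.UltSafeFrom s 1 w :=
  ⟨0, s, hs, by rw [A.muHat_of_le hs.le]; rfl,
    fun n => (A.safeFin_iff hs _).2 (A.complete1_runList hs _)⟩

theorem le_d_of_ultSafeFrom {s : Q} {x : ℕ} {w : ℕ → α} (h : A.UltSafeFrom s x w) :
    x ≤ d := by
  obtain ⟨-, p, rfl, -⟩ := h
  exact A.layer_le p

noncomputable def maxUltSafeLayer (s : Q) (w : ℕ → α) : ℕ :=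
  Nat.findGreatest (fun x => A.UltSafeFrom s x w) d

theorem le_maxUltSafeLayer {s : Q} {x : ℕ} {w : ℕ → α} (h : A.UltSafeFrom s x w) :
    x ≤ A.maxUltSafeLayer s w :=
  Nat.le_findGreatest (A.le_d_of_ultSafeFrom h) h

theorem ultSafeFrom_maxUltSafeLayer {s : Q} (hs : A.layer s = 1) (w : ℕ → α) :
    A.UltSafeFrom s (A.maxUltSafeLayer s w) w :=
  Nat.findGreatest_of_ne_zero rfl
    (Nat.one_le_iff_ne_zero.1 (A.le_maxUltSafeLayer (A.ultSafeFrom_one hs w)))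

theorem layeredAcceptFrom_iff {s : Q} (hs : A.layer s = 1) (w : ℕ → α) :
    A.LayeredAcceptFrom s w ↔ Even (A.maxUltSafeLayer s w) := by
  refine ⟨fun ⟨x, hx, hsafe, hmax⟩ => ?_,
    fun h => ⟨_, h, A.ultSafeFrom_maxUltSafeLayer hs w, fun y hy => A.le_maxUltSafeLayer hy⟩⟩
  rwa [le_antisymm (hmax _ (A.ultSafeFrom_maxUltSafeLayer hs w)) (A.le_maxUltSafeLayer hsafe)]

/-- A safe child would make `w` ultimately safe one layer higher. -/
theorem exists_stronglySafe_maxUltSafeLayer {s : Q} (hs : A.layer s = 1) (w : ℕ → α) :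
    ∃ n₀, ∀ N, n₀ ≤ N → ∃ p, A.layer p = A.maxUltSafeLayer s w ∧
      A.runList s (wordPrefix w N) = some (A.muHat 1 p) ∧ A.StronglySafe p (wordDrop w N) := by
  obtain ⟨n₀, p₀, hlp₀, hrun₀, hsafe₀⟩ := A.ultSafeFrom_maxUltSafeLayer hs w
  refine ⟨n₀, fun N hN => ?_⟩
  obtain ⟨k, rfl⟩ := Nat.exists_eq_add_of_le hN
  obtain ⟨p, hp⟩ := Option.isSome_iff_exists.1 ((A.safeFin_iff hlp₀ _).1 (hsafe₀ k))
  obtain ⟨hlp, hsafe⟩ := A.safeInf_shift hlp₀ hsafe₀ hp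
  have hrun : A.runList s (wordPrefix w (n₀ + k)) = some (A.muHat 1 p) := by
    rw [wordPrefix_add, runList_append, hrun₀, Option.bind_some, A.runList_muHat hp]
  rw [wordDrop_wordDrop] at hsafe
  refine ⟨p, hlp, hrun, by rwa [hlp], fun n p' hp' hrunp hsafe' => ?_⟩
  have hlt : A.maxUltSafeLayer s w < A.layer p' := by omega
  have hp'1 : 1 < A.layer p' := by have := A.layer_pos p; omega
  refine absurd (A.le_maxUltSafeLayer ⟨n₀ + k + n, p', rfl, ?_, ?_⟩) (not_le.2 hlt)
  · rw [wordPrefix_add, runList_append, hrun, Option.bind_some, A.runList_muHat hrunp,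
      A.muHat_μ hp'1 hp'1]
  · rwa [wordDrop_wordDrop] at hsafe'

theorem even_minInfOften_iff_of_greedy (hcons : A.Consistent) {s l : Q} (hs : A.layer s = 1)
    (hl : A.muHat 1 l = s) {w : ℕ → α} {ρ : ℕ → Q} (hρ : A.IsSemRun w l ρ)
    (hgreedy : ∀ j, ¬ (Even (A.semPrio (ρ j) (w j)) ↔ Even (A.maxUltSafeLayer s w)) →
      ρ (j + 1) = A.greedySucc w j (ρ j) (w j)) :
    Even (minInfOften (A.runPrios w ρ)) ↔ Even (A.maxUltSafeLayer s w) := by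
  set c := minInfOften (A.runPrios w ρ)
  have hinf : ∃ᶠ j in atTop, A.semPrio (ρ j) (w j) = c :=
    frequently_eq_minInfOften fun n => A.semPrio_le_d (ρ n) (w n)
  obtain ⟨N₁, hN₁⟩ := eventually_atTop.1 (eventually_minInfOften_le (A.runPrios w ρ))
  obtain ⟨n₀, hfam⟩ := A.exists_stronglySafe_maxUltSafeLayer hs w
  set N := max N₁ n₀
  obtain ⟨p, hlp, hrunp, hp⟩ := hfam N (le_max_right _ _)
  have hge : ∀ i, N ≤ i → c ≤ A.semPrio (ρ i) (w i) :=
    fun i hi => hN₁ i (le_of_max_le_left hi)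
  have hc1 : 1 ≤ c := by
    obtain ⟨j, hj⟩ := hinf.exists
    exact hj ▸ A.one_le_semPrio _ _
  have hlay : A.layer (A.muHat c (ρ N)) = c :=
    A.layer_muHat hc1 ((hge N le_rfl).trans (A.semPrio_le_layer _ _))
  have hμ : A.muHat 1 (A.muHat c (ρ N)) = A.muHat 1 p := by
    have h := A.runList_muHat_of_le_semPrio hρ.2 (N := 0) le_rfl
      (fun i _ => A.one_le_semPrio (ρ i) (w i)) N
    rw [wordDrop_zero, zero_add, hρ.1, hl, hrunp] at h
    rw [A.muHat_muHat le_rfl hc1]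
    exact (Option.some.inj h).symm
  by_contra hne
  have hsafe := A.stronglySafe_of_greedy hρ.2 hc1 hinf hge fun j hj => hgreedy j (by rwa [hj])
  exact hne (by simpa only [hlay, hlp] using hcons.even_layer_iff hμ hsafe hp)

noncomputable def play (σ τ : List (Q × α) → Q → α → Q) (w : ℕ → α) (p : Q) :
    ℕ → Q
  | 0 => p
  | n + 1 =>
    let h := List.ofFn fun j : Fin n => (play σ τ w p j, w j)
    if Odd (A.semPrio (play σ τ w p n) (w n)) then σ h (play σ τ w p n) (w n)
    else τ h (play σ τ w p n) (w n)

theorem play_succ (σ τ : List (Q × α) → Q → α → Q) (w : ℕ → α) (p : Q) (n : ℕ) :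
    A.play σ τ w p (n + 1) = if Odd (A.semPrio (A.play σ τ w p n) (w n)) then
      σ (List.ofFn fun j : Fin n => (A.play σ τ w p j, w j)) (A.play σ τ w p n) (w n) else
      τ (List.ofFn fun j : Fin n => (A.play σ τ w p j, w j)) (A.play σ τ w p n) (w n) := by
  rw [play]

theorem isSemRun_play {σ τ : List (Q × α) → Q → α → Q} (hσ : A.EveResolver σ)
    (hτ : A.AdamResolver τ) (w : ℕ → α) (p : Q) : A.IsSemRun w p (A.play σ τ w p) := by
  refine ⟨by rw [play], fun i => ?_⟩
  rw [play_succ]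
  split_ifs with h
  exacts [hσ _ _ _ h, hτ _ _ _ (Nat.not_odd_iff_even.1 h)]

theorem consEve_play (σ τ : List (Q × α) → Q → α → Q) (w : ℕ → α) (p : Q) :
    A.ConsEve σ w (A.play σ τ w p) := fun i h => by rw [play_succ, if_pos h]

theorem consAdam_play (σ τ : List (Q × α) → Q → α → Q) (w : ℕ → α) (p : Q) :
    A.ConsAdam τ w (A.play σ τ w p) := fun i h => by
  rw [play_succ, if_neg (Nat.not_odd_iff_even.2 h)]

noncomputable def greedyResolver (w : ℕ → α) : List (Q × α) → Q → α → Q :=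
  fun h q a => A.greedySucc w h.length q a

theorem greedyResolver_ofFn (w : ℕ → α) (ρ : ℕ → Q) (i : ℕ) (q : Q) (a : α) :
    A.greedyResolver w (List.ofFn fun j : Fin i => (ρ j, w j)) q a = A.greedySucc w i q a := by
  simp [greedyResolver]

theorem semAccept_iff (hcons : A.Consistent) {s l : Q} (hs : A.layer s = 1)
    (hl : A.muHat 1 l = s) (w : ℕ → α) :
    A.SemAccept l w ↔ Even (A.maxUltSafeLayer s w) := by
  have hres : ∀ h q a, A.semStep q a (A.greedyResolver w h q a) :=
    fun h q a => A.semStep_greedySucc w _ q a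
  constructor
  · rintro ⟨σ, hσ, hwin⟩
    by_contra hodd
    let ρ := A.play σ (A.greedyResolver w) w l
    have hρ := A.isSemRun_play hσ (fun h q a _ => hres h q a) w l
    refine hodd ((A.even_minInfOften_iff_of_greedy hcons hs hl hρ fun j hj => ?_).1
      (hwin ρ hρ (A.consEve_play _ _ w l)))
    rw [A.consAdam_play _ _ w l j (by tauto), greedyResolver_ofFn]
  · intro heven
    refine ⟨A.greedyResolver w, fun h q a _ => hres h q a, fun ρ hρ hρσ => ?_⟩
    refine (A.even_minInfOften_iff_of_greedy hcons hs hl hρ fun j hj => ?_).2 heven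
    rw [hρσ j (Nat.not_even_iff_odd.1 (by tauto)), greedyResolver_ofFn]

end Layered

theorem statement_0_general {Q α : Type} {d : ℕ}
    (A : Layered Q α d) (hcons : A.Consistent)
    (q0 : Q) (hq0' : A.muHat 1 q0 = A.init) :
    (∀ w : ℕ → α, A.LayeredAcceptFrom A.init w ↔ A.SemAccept q0 w) ∧ A.UnifSD := by
  refine ⟨fun w => ?_, fun p q _ _ hpq w => ?_⟩
  · rw [A.layeredAcceptFrom_iff A.init_layer, A.semAccept_iff hcons A.init_layer hq0']
  · have hs : A.layer (A.muHat 1 p) = 1 := A.layer_muHat le_rfl (A.layer_pos p)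
    rw [A.semAccept_iff hcons hs rfl, A.semAccept_iff hcons hs hpq.symm]

/-- For a consistent layered automaton `A`, layered acceptance coincides
with acceptance by the semantics automaton `⟦A⟧`, and `⟦A⟧` is uniformly semantically
deterministic. -/
theorem statement_0 {Q α : Type} [Fintype Q] [Fintype α] [Nonempty α] {d : ℕ} (hd : 1 ≤ d)
    (A : Layered Q α d) (hcons : A.Consistent)
    (q0 : Q) (hq0 : A.IsLeaf q0) (hq0' : A.muHat 1 q0 = A.init) :
    (∀ w : ℕ → α, A.LayeredAcceptFrom A.init w ↔ A.SemAccept q0 w) ∧ A.UnifSD :=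
  statement_0_general A hcons q0 hq0'
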